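/- For every δ ∈ (0, π/4] and every γ in the secondary region R_δ (the set of points of [-π,π]^d at sup-distance more than δ from every λ with |ψ(λ)| = 1), one has |ψ(γ)|² ≤ cos² δ. -/

import Mathlib

open scoped BigOperators Real

/-- Sign of a Boolean: encodes an element of `{-1,1}`. -/
noncomputable def sgn (b : Bool) : ℝ := if b then 1 else -1

/-- `λ · Z(y)` where `Z(y) = (y_i y_j)_{i<j}`. -/
noncomputable def dotZ (n : ℕ) (lam : Fin n → Fin n → ℝ) (y : Fin n → Bool) : ℝ :=
  ∑ p ∈ Finset.univ.filter (fun p : Fin n × Fin n => p.1 < p.2),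
    lam p.1 p.2 * sgn (y p.1) * sgn (y p.2)

/-- Characteristic function `ψ(λ) = 2^{-n} ∑_{y ∈ {-1,1}^n} e^{i λ · Z(y)}`. -/
noncomputable def psi (n : ℕ) (lam : Fin n → Fin n → ℝ) : ℂ :=
  (1 / 2 ^ n : ℂ) * ∑ y : Fin n → Bool, Complex.exp (Complex.I * (dotZ n lam y : ℝ))

/-! Pairing each `y` with its flip at a vertex `k` gives `2^n |ψ(γ)| ≤ ∑_y |cos S_k(y)|`, where
`S_k(y) = ∑_j γ_{kj} y_j`; Cauchy–Schwarz and `∑_y cos (2 S_k(y)) = 2^n ∏_j cos (2 γ_{kj})` turn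
this into `|ψ(γ)|² ≤ (1 + ∏_j cos (2 γ_{kj})) / 2`, so it suffices to find a row whose product is
at most `cos (2δ) = 2 cos² δ - 1`.

Round `γ` entrywise to the lattice `(π/2)ℤ`; the errors are at most `π/4`. If some error is at
least `δ`, that single factor already has `|cos (2 γ_{ij})| ≤ cos (2δ)`. Otherwise, a row with odd
lattice sum has product `≤ 0`. If all row sums are even, every `S_k(y)` of the lattice point `λ`
lies in `πℤ`, so flipping coordinates does not change `e^{i λ·Z(y)}` and `|ψ(λ)| = 1`; but `λ` is
within `δ` of `γ`, which `γ ∈ R_δ` excludes. -/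

lemma zpow_sum₀ {ι G₀ : Type*} [CommGroupWithZero G₀] {a : G₀} (ha : a ≠ 0) (s : Finset ι)
    (f : ι → ℤ) : a ^ (∑ i ∈ s, f i) = ∏ i ∈ s, a ^ f i := by
  classical
  induction s using Finset.induction_on with
  | empty => simp
  | insert i s hi ih => rw [Finset.prod_insert hi, Finset.sum_insert hi, zpow_add₀ ha, ih]

lemma Function.eq_of_forall_update_eq {ι β γ : Type*} [Fintype ι] [DecidableEq ι]
    {f : (ι → β) → γ} (hf : ∀ y i b, f (Function.update y i b) = f y) (y z : ι → β) :
    f y = f z := by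
  have h : ∀ s : Finset ι, f (s.piecewise y z) = f z := by
    intro s
    induction s using Finset.induction_on with
    | empty => simp
    | insert i s _ ih => rw [Finset.piecewise_insert, hf, ih]
  simpa using h Finset.univ

lemma prod_le_abs_of_abs_le_one {ι R : Type*} [Fintype ι] [CommRing R] [LinearOrder R]
    [IsStrictOrderedRing R] (f : ι → R) (hf : ∀ i, |f i| ≤ 1) (j : ι) : ∏ i, f i ≤ |f j| := by
  classical
  calc ∏ i, f i ≤ ∏ i, |f i| := (le_abs_self _).trans (Finset.abs_prod _ _).le
    _ = |f j| * ∏ i ∈ Finset.univ.erase j, |f i| :=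
        (Finset.mul_prod_erase _ _ (Finset.mem_univ j)).symm
    _ ≤ |f j| := mul_le_of_le_one_right (abs_nonneg _)
        (Finset.prod_le_one (fun _ _ => abs_nonneg _) fun i _ => hf i)

lemma Complex.norm_exp_I_mul_add_exp_I_mul (a b : ℝ) :
    ‖Complex.exp (Complex.I * a) + Complex.exp (Complex.I * b)‖ = 2 * |Real.cos ((a - b) / 2)| := by
  have h : Complex.exp (Complex.I * a) + Complex.exp (Complex.I * b) =
      Complex.exp (((a + b) / 2 : ℝ) * Complex.I) * (2 * Real.cos ((a - b) / 2)) := by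
    rw [Complex.ofReal_cos, Complex.two_cos, mul_add, ← Complex.exp_add, ← Complex.exp_add]
    push_cast
    ring_nf
  rw [h, norm_mul, Complex.norm_exp_ofReal_mul_I, one_mul, norm_mul, Complex.norm_two,
    Complex.norm_real, Real.norm_eq_abs]

lemma cos_two_mul_eq_neg_one_zpow_mul (x : ℝ) (m : ℤ) :
    Real.cos (2 * x) = (-1) ^ m * Real.cos (2 * (x - π / 2 * m)) := by
  rw [← Real.cos_add_int_mul_pi]
  ring_nf

lemma abs_sub_pi_div_two_mul_round_le (x : ℝ) : |x - π / 2 * round (2 * x / π)| ≤ π / 4 := by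
  have h := abs_sub_round (2 * x / π)
  rw [show x - π / 2 * round (2 * x / π) = π / 2 * (2 * x / π - round (2 * x / π)) by
    field_simp, abs_mul, abs_of_pos (by positivity)]
  nlinarith [Real.pi_pos]

lemma abs_pi_div_two_mul_round_le {x : ℝ} (hx : |x| ≤ π) : |π / 2 * round (2 * x / π)| ≤ π := by
  have hπ := Real.pi_pos
  have h2 : |2 * x / π| ≤ 2 := by
    rw [abs_div, abs_mul, abs_two, abs_of_pos hπ, div_le_iff₀ hπ]; linarith
  have hr : |round (2 * x / π)| ≤ 2 := by
    rw [round_eq, abs_le, Int.le_floor, ← Int.lt_add_one_iff, Int.floor_lt]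
    constructor <;> push_cast <;> linarith [abs_le.mp h2]
  rw [abs_mul, abs_of_pos (by positivity), ← Int.cast_abs]
  have : ((|round (2 * x / π)| : ℤ) : ℝ) ≤ 2 := by exact_mod_cast hr
  nlinarith

lemma abs_cos_two_mul_le {x δ : ℝ} (hδ : 0 ≤ δ) (h : δ ≤ |x - π / 2 * round (2 * x / π)|) :
    |Real.cos (2 * x)| ≤ Real.cos (2 * δ) := by
  set e := x - π / 2 * round (2 * x / π)
  have he := abs_sub_pi_div_two_mul_round_le x
  have hsign : |(-1 : ℝ) ^ round (2 * x / π)| = 1 := by simp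
  rw [cos_two_mul_eq_neg_one_zpow_mul x (round (2 * x / π)), abs_mul, hsign, one_mul,
    ← Real.cos_abs, abs_mul, abs_two, abs_of_nonneg (Real.cos_nonneg_of_mem_Icc ⟨_, _⟩)]
  · exact Real.cos_le_cos_of_nonneg_of_le_pi (by linarith) (by linarith [Real.pi_pos]) (by linarith)
  · linarith [Real.pi_pos, abs_nonneg e]
  · linarith

lemma prod_cos_two_mul_nonpos {ι : Type*} (s : Finset ι) (x : ι → ℝ) (m : ι → ℤ)
    (hx : ∀ j ∈ s, |x j - π / 2 * m j| ≤ π / 4) (hodd : Odd (∑ j ∈ s, m j)) :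
    ∏ j ∈ s, Real.cos (2 * x j) ≤ 0 := by
  have hnonneg : 0 ≤ ∏ j ∈ s, Real.cos (2 * (x j - π / 2 * m j)) := by
    refine Finset.prod_nonneg fun j hj => Real.cos_nonneg_of_mem_Icc ⟨?_, ?_⟩ <;>
      linarith [abs_le.mp (hx j hj)]
  rw [Finset.prod_congr rfl fun j _ => cos_two_mul_eq_neg_one_zpow_mul (x j) (m j),
    Finset.prod_mul_distrib, ← zpow_sum₀ (by norm_num), hodd.neg_one_zpow]
  linarith

lemma sgn_not (b : Bool) : sgn (!b) = -sgn b := by cases b <;> simp [sgn]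

lemma cos_sgn_mul (b : Bool) (x : ℝ) : Real.cos (sgn b * x) = Real.cos x := by
  cases b <;> simp [sgn]

lemma exists_sum_mul_sgn_eq_two_mul {ι : Type*} [Fintype ι] (m : ι → ℤ) (hm : Even (∑ j, m j))
    (y : ι → Bool) : ∃ z : ℤ, ∑ j, (m j : ℝ) * sgn (y j) = 2 * z := by
  obtain ⟨r, hr⟩ := hm
  refine ⟨r - ∑ j, if y j then 0 else m j, ?_⟩
  have hsgn : ∀ j, (m j : ℝ) * sgn (y j) = m j - 2 * (if y j then 0 else (m j : ℝ)) := by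
    intro j
    cases y j
    · simp [sgn]
      ring
    · simp [sgn]
  have hr' : ∑ j, (m j : ℝ) = r + r := by exact_mod_cast hr
  rw [Finset.sum_congr rfl fun j _ => hsgn j, Finset.sum_sub_distrib, ← Finset.mul_sum, hr']
  push_cast [apply_ite]
  ring

lemma sum_cos_sum_mul_sgn {ι : Type*} [Fintype ι] [DecidableEq ι] (a : ι → ℝ) :
    ∑ y : ι → Bool, Real.cos (∑ j, a j * sgn (y j)) = ∏ j, 2 * Real.cos (a j) := by
  have hcol : ∀ j, ∑ b : Bool, Complex.exp (↑(a j * sgn b) * Complex.I) =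
      ↑(2 * Real.cos (a j)) := by
    intro j
    simp [sgn, Complex.two_cos]
  have h : ∑ y : ι → Bool, Complex.exp (↑(∑ j, a j * sgn (y j)) * Complex.I) =
      ↑(∏ j, 2 * Real.cos (a j)) := by
    simp only [Complex.ofReal_sum, Finset.sum_mul, Complex.exp_sum, Complex.ofReal_prod, ← hcol]
    exact (Fintype.prod_sum fun j (b : Bool) => Complex.exp (↑(a j * sgn b) * Complex.I)).symm
  have hre := congrArg Complex.re h
  rw [Complex.re_sum, Complex.ofReal_re] at hre
  simpa only [Complex.exp_ofReal_mul_I_re] using hre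

noncomputable def pairCoeff {n : ℕ} (γ : Fin n → Fin n → ℝ) (i j : Fin n) : ℝ :=
  if i < j then γ i j else if j < i then γ j i else 0

noncomputable def rowSum {n : ℕ} (γ : Fin n → Fin n → ℝ) (k : Fin n) (y : Fin n → Bool) : ℝ :=
  ∑ j, pairCoeff γ k j * sgn (y j)

section PairCoeff

variable {n : ℕ} (γ : Fin n → Fin n → ℝ)

lemma pairCoeff_of_lt {i j : Fin n} (h : i < j) : pairCoeff γ i j = γ i j := if_pos h

lemma pairCoeff_comm (i j : Fin n) : pairCoeff γ i j = pairCoeff γ j i := by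
  unfold pairCoeff
  split_ifs <;> grind

lemma pairCoeff_self (i : Fin n) : pairCoeff γ i i = 0 := by simp [pairCoeff]

lemma pairCoeff_eq_self (hsymm : ∀ i j, γ i j = γ j i) (hdiag : ∀ i, γ i i = 0) :
    pairCoeff γ = γ := by
  ext i j
  unfold pairCoeff
  split_ifs <;> grind

end PairCoeff

lemma rowSum_eq_sum_sum {n : ℕ} (γ : Fin n → Fin n → ℝ) (k : Fin n) (y : Fin n → Bool) :
    rowSum γ k y = ∑ i, ∑ j, if i < j then
      γ i j * ((if i = k then sgn (y j) else 0) + if j = k then sgn (y i) else 0) else 0 := by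
  have h : ∀ i j, (if i < j then
      γ i j * ((if i = k then sgn (y j) else 0) + if j = k then sgn (y i) else 0) else 0) =
      (if i = k then (if k < j then γ k j * sgn (y j) else 0) else 0) +
      (if j = k then (if i < k then γ i k * sgn (y i) else 0) else 0) := by
    intro i j; split_ifs <;> simp_all
  simp only [h, Finset.sum_add_distrib, Finset.sum_ite_eq', Finset.mem_univ, if_true]
  rw [Finset.sum_comm]
  simp only [Finset.sum_ite_eq', Finset.mem_univ, if_true, rowSum, pairCoeff, ite_mul, zero_mul,
    ← Finset.sum_add_distrib]
  refine Finset.sum_congr rfl fun j _ => ?_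
  split_ifs <;> grind

lemma dotZ_update {n : ℕ} (γ : Fin n → Fin n → ℝ) (y : Fin n → Bool) (k : Fin n) (b : Bool) :
    dotZ n γ (Function.update y k b) = dotZ n γ y + (sgn b - sgn (y k)) * rowSum γ k y := by
  have hsgn : ∀ i, sgn (Function.update y k b i) =
      sgn (y i) + if i = k then sgn b - sgn (y k) else 0 := by
    intro i
    by_cases h : i = k <;> simp [h]
  simp only [dotZ, Finset.sum_filter, Fintype.sum_prod_type, rowSum_eq_sum_sum, Finset.mul_sum,
    ← Finset.sum_add_distrib, hsgn]
  refine Finset.sum_congr rfl fun i _ => Finset.sum_congr rfl fun j _ => ?_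
  split_ifs <;> grind

lemma two_pow_mul_norm_psi_le {n : ℕ} (γ : Fin n → Fin n → ℝ) (k : Fin n) :
    2 ^ n * ‖psi n γ‖ ≤ ∑ y : Fin n → Bool, |Real.cos (rowSum γ k y)| := by
  set F : (Fin n → Bool) → ℂ := fun y => Complex.exp (Complex.I * (dotZ n γ y : ℝ))
  set σ : (Fin n → Bool) → (Fin n → Bool) := fun y => Function.update y k (!y k)
  have hflip : Function.Involutive σ := fun y => by simp [σ]
  have hpsi : ‖(2 : ℂ) ^ n * psi n γ‖ = 2 ^ n * ‖psi n γ‖ := by simp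
  have hsum : (2 : ℂ) ^ n * psi n γ = ∑ y, F y := by
    simp only [psi, F]
    field_simp
  have hpair : ∑ y, (F y + F (σ y)) = 2 * ∑ y, F y := by
    rw [Finset.sum_add_distrib, two_mul,
      Fintype.sum_bijective _ hflip.bijective (fun y => F (σ y)) F fun _ => rfl]
  have hterm : ∀ y, ‖F y + F (σ y)‖ = 2 * |Real.cos (rowSum γ k y)| := by
    intro y
    rw [Complex.norm_exp_I_mul_add_exp_I_mul, dotZ_update, sgn_not,
      show (dotZ n γ y - (dotZ n γ y + (-sgn (y k) - sgn (y k)) * rowSum γ k y)) / 2 =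
        sgn (y k) * rowSum γ k y by ring, cos_sgn_mul]
  have := norm_sum_le Finset.univ fun y => F y + F (σ y)
  rw [hpair, norm_mul, Complex.norm_two, ← hsum, hpsi] at this
  simp only [hterm, ← Finset.mul_sum] at this
  linarith

lemma sum_cos_rowSum_sq {n : ℕ} (γ : Fin n → Fin n → ℝ) (k : Fin n) :
    ∑ y : Fin n → Bool, Real.cos (rowSum γ k y) ^ 2 =
      2 ^ n * ((1 + ∏ j, Real.cos (2 * pairCoeff γ k j)) / 2) := by
  have h2 : ∀ y, 2 * rowSum γ k y = ∑ j, 2 * pairCoeff γ k j * sgn (y j) := by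
    intro y
    simp only [rowSum, Finset.mul_sum, mul_assoc]
  simp only [Real.cos_sq, h2, Finset.sum_add_distrib, ← Finset.sum_div, sum_cos_sum_mul_sgn,
    Finset.prod_mul_distrib, Finset.prod_const, Finset.sum_const, Finset.card_univ,
    Fintype.card_fun, Fintype.card_bool, Fintype.card_fin, nsmul_eq_mul]
  push_cast
  ring

lemma norm_psi_sq_le {n : ℕ} (γ : Fin n → Fin n → ℝ) (k : Fin n) :
    ‖psi n γ‖ ^ 2 ≤ (1 + ∏ j, Real.cos (2 * pairCoeff γ k j)) / 2 := by
  have hcs : (∑ y : Fin n → Bool, |Real.cos (rowSum γ k y)|) ^ 2 ≤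
      2 ^ n * ∑ y : Fin n → Bool, Real.cos (rowSum γ k y) ^ 2 := by
    simpa [sq_abs] using sq_sum_le_card_mul_sum_sq (s := Finset.univ)
      (f := fun y : Fin n → Bool => |Real.cos (rowSum γ k y)|)
  have hpsi := pow_le_pow_left₀ (by positivity) (two_pow_mul_norm_psi_le γ k) 2
  rw [sum_cos_rowSum_sq] at hcs
  have h2n : (0 : ℝ) < (2 ^ n) ^ 2 := by positivity
  nlinarith

lemma norm_psi_eq_one {n : ℕ} (lam : Fin n → Fin n → ℝ)
    (h : ∀ k y, ∃ z : ℤ, rowSum lam k y = z * π) : ‖psi n lam‖ = 1 := by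
  set F : (Fin n → Bool) → ℂ := fun y => Complex.exp (Complex.I * (dotZ n lam y : ℝ))
  have hupdate : ∀ y k b, F (Function.update y k b) = F y := by
    intro y k b
    obtain ⟨z, hz⟩ := h k y
    obtain ⟨N, hN⟩ : ∃ N : ℤ, sgn b - sgn (y k) = 2 * N := by
      cases b <;> cases y k
      exacts [⟨0, by simp⟩, ⟨-1, by norm_num [sgn]⟩, ⟨1, by norm_num [sgn]⟩, ⟨0, by simp⟩]
    have : Complex.I * ↑(dotZ n lam (Function.update y k b)) =
        Complex.I * ↑(dotZ n lam y) + ↑(N * z) * (2 * π * Complex.I) := by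
      rw [dotZ_update, hN, hz]
      push_cast
      ring
    simp only [F, this, Complex.exp_add, Complex.exp_int_mul_two_pi_mul_I, mul_one]
  have hconst : ∀ y, F y = F fun _ => true := fun y =>
    Function.eq_of_forall_update_eq (f := F) hupdate y _
  simp only [psi, F] at hconst ⊢
  rw [Finset.sum_congr rfl fun y _ => hconst y, Finset.sum_const, Finset.card_univ,
    Fintype.card_fun, Fintype.card_bool, Fintype.card_fin, nsmul_eq_mul]
  simp [Complex.norm_exp_ofReal_mul_I, mul_comm Complex.I]

lemma norm_psi_lattice_eq_one {n : ℕ} (m : Fin n → Fin n → ℤ) (hsymm : ∀ i j, m i j = m j i)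
    (hdiag : ∀ i, m i i = 0) (heven : ∀ k, Even (∑ j, m k j)) :
    ‖psi n fun i j => π / 2 * m i j‖ = 1 := by
  refine norm_psi_eq_one _ fun k y => ?_
  obtain ⟨z, hz⟩ := exists_sum_mul_sgn_eq_two_mul (m k) (heven k) y
  refine ⟨z, ?_⟩
  rw [rowSum, pairCoeff_eq_self _ (fun i j => by rw [hsymm]) (fun i => by simp [hdiag])]
  simp only [mul_assoc, ← Finset.mul_sum, hz]
  ring

lemma exists_prod_cos_two_mul_pairCoeff_le {n : ℕ} {δ : ℝ} (hδ : 0 < δ) (hδ' : δ ≤ π / 4)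
    (γ : Fin n → Fin n → ℝ) (hbox : ∀ i j : Fin n, i < j → |γ i j| ≤ π)
    (hfar : ∀ lam : Fin n → Fin n → ℝ, (∀ i j : Fin n, i < j → |lam i j| ≤ π) →
      ‖psi n lam‖ = 1 → ∃ i j : Fin n, i < j ∧ δ < |γ i j - lam i j|) :
    ∃ k, ∏ j, Real.cos (2 * pairCoeff γ k j) ≤ Real.cos (2 * δ) := by
  set m : Fin n → Fin n → ℤ := fun i j => round (2 * pairCoeff γ i j / π)
  have hcos : 0 ≤ Real.cos (2 * δ) := Real.cos_nonneg_of_mem_Icc ⟨by linarith, by linarith⟩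
  by_cases hnear : ∀ i j, |pairCoeff γ i j - π / 2 * m i j| < δ
  · by_cases heven : ∀ k, Even (∑ j, m k j)
    · exfalso
      have hlat := norm_psi_lattice_eq_one m (fun i j => by simp only [m, pairCoeff_comm γ i j])
        (fun i => by simp [m, pairCoeff_self]) heven
      obtain ⟨i, j, hij, hgt⟩ := hfar _ (fun i j hij => by
        simpa only [m, pairCoeff_of_lt γ hij] using abs_pi_div_two_mul_round_le (hbox i j hij)) hlat
      have := hnear i j
      rw [pairCoeff_of_lt γ hij] at this
      linarith
    · push Not at heven
      obtain ⟨k, hk⟩ := heven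
      exact ⟨k, (prod_cos_two_mul_nonpos _ _ (m k) (fun j _ => (hnear k j).le.trans hδ')
        (Int.not_even_iff_odd.mp hk)).trans hcos⟩
  · push Not at hnear
    obtain ⟨i, j, hij⟩ := hnear
    exact ⟨i, (prod_le_abs_of_abs_le_one _ (fun j => Real.abs_cos_le_one _) j).trans
      (abs_cos_two_mul_le hδ.le hij)⟩

theorem stmt15_general (n : ℕ) (δ : ℝ) (hδ : 0 < δ) (hδ' : δ ≤ π / 4)
    (gam : Fin n → Fin n → ℝ)
    (hbox : ∀ i j : Fin n, i < j → |gam i j| ≤ π)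
    (hfar : ∀ lam : Fin n → Fin n → ℝ,
      (∀ i j : Fin n, i < j → |lam i j| ≤ π) →
      ‖psi n lam‖ = 1 →
      ∃ i j : Fin n, i < j ∧ δ < |gam i j - lam i j|) :
    (‖psi n gam‖) ^ 2 ≤ (Real.cos δ) ^ 2 := by
  obtain ⟨k, hk⟩ := exists_prod_cos_two_mul_pairCoeff_le hδ hδ' gam hbox hfar
  calc ‖psi n gam‖ ^ 2 ≤ (1 + ∏ j, Real.cos (2 * pairCoeff gam k j)) / 2 := norm_psi_sq_le gam k
    _ ≤ (1 + Real.cos (2 * δ)) / 2 := by linarith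
    _ = Real.cos δ ^ 2 := by rw [Real.cos_sq]; ring

theorem stmt15 (n : ℕ) (hn : 3 ≤ n) (δ : ℝ) (hδ : 0 < δ) (hδ' : δ ≤ π / 4)
    (gam : Fin n → Fin n → ℝ)
    (hbox : ∀ i j : Fin n, i < j → |gam i j| ≤ π)
    (hfar : ∀ lam : Fin n → Fin n → ℝ,
      (∀ i j : Fin n, i < j → |lam i j| ≤ π) →
      ‖psi n lam‖ = 1 →
      ∃ i j : Fin n, i < j ∧ δ < |gam i j - lam i j|) :
    (‖psi n gam‖) ^ 2 ≤ (Real.cos δ) ^ 2 :=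
  stmt15_general n δ hδ hδ' gam hbox hfar
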